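/- For every integer m ≥ 2, the infimum of all constants C ≥ 0 such that Σ_{j₁=1}^{N} ( Σ_{j₂,...,j_m=1}^{N} |U(e_{j₁},...,e_{j_m})|² )^{1/2} ≤ C · ‖U‖ holds for every positive integer N and every continuous m-linear form U : (ℝ^N)^m → ℝ (ℝ^N with the sup norm) is exactly (√2)^{m-1}; moreover this infimum is attained, i.e. C = (√2)^{m-1} is a valid constant. -/

import Mathlib

/-!
Upper bound: for a fixed first index `j₁`, the form `V = U(e_{j₁}, ·)` satisfies
`(∑_j V(e_j)²)^{1/2} ≤ (√2)^{m-1} 𝔼_σ |V(σ₁, …, σ_{m-1})|` over independent random sign vectors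
`σ_t`. This is Szarek's sharp Khintchine inequality `(∑ ‖aᵢ‖²)^{1/2} ≤ √2 𝔼 ‖∑ εᵢ aᵢ‖`, applied one
variable at a time with coefficients in a Euclidean space. Summing over `j₁`, the sign vectors
`σ` are paired against the first variable, and `∑_{j₁} |U(e_{j₁}, σ)| ≤ ‖U‖` by `ℓ¹`–`ℓ^∞`
duality.

Szarek's inequality follows from a Poincaré inequality on the cube `{±1}ⁿ`: `f(ε) = ‖∑ εᵢ aᵢ‖`
is even, so its Walsh coefficients of degree one vanish and `Var f ≤ ⅛ ∑ᵢ 𝔼 (f - f ∘ flipᵢ)²`;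
moreover `|f - f ∘ flipᵢ| ≤ 2 ‖aᵢ‖` and `𝔼 f² = ∑ ‖aᵢ‖²`, whence `𝔼 f² ≤ 2 (𝔼 f)²`.

Lower bound: on `ℝ^N` with `N = 2^{m-1}`, index the coordinates of the first variable by sign
vectors `b` and put `U(x¹, …, x^m) = ∑_b x¹_b ∏_{t ≥ 2} (x^t_1 + b_t x^t_2)`. Since
`|x₁ + x₂| + |x₁ - x₂| ≤ 2 ‖x‖_∞`, `‖U‖ ≤ 2^{m-1}`, while each of the `N` rows contributes
exactly `(√2)^{m-1}`.
-/

open Finset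

namespace Hypercube

lemma sum_units_int {M : Type*} [AddCommMonoid M] (f : ℤˣ → M) : ∑ u, f u = f 1 + f (-1) := by
  rw [UnitsInt.univ, sum_pair (by decide)]

lemma abs_coe_units_int (u : ℤˣ) : |(u : ℝ)| = 1 :=
  AbsoluteValue.map_units_intCast AbsoluteValue.abs u

variable {ι : Type*}

lemma mul_self_signs (ε : ι → ℤˣ) : ε * ε = 1 := funext fun i => Int.units_mul_self (ε i)

def walsh (A : Finset ι) (ε : ι → ℤˣ) : ℝ := ∏ i ∈ A, (ε i : ℝ)

lemma walsh_mul (A : Finset ι) (ε δ : ι → ℤˣ) : walsh A (ε * δ) = walsh A ε * walsh A δ := by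
  simp only [walsh, Pi.mul_apply, Units.val_mul, Int.cast_mul, prod_mul_distrib]

lemma walsh_mul_self (A : Finset ι) (ε : ι → ℤˣ) : walsh A ε * walsh A ε = 1 := by
  rw [← walsh_mul, mul_self_signs, walsh]
  simp

@[simp] lemma walsh_one (A : Finset ι) : walsh A 1 = 1 := by simp [walsh]

lemma walsh_neg (A : Finset ι) (ε : ι → ℤˣ) : walsh A (-ε) = (-1) ^ #A * walsh A ε := by
  simp [walsh, prod_neg]

lemma walsh_mulSingle_neg_one [DecidableEq ι] (A : Finset ι) (i : ι) :
    walsh A (Pi.mulSingle i (-1)) = if i ∈ A then -1 else 1 := by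
  have : ∀ j, ((Pi.mulSingle i (-1 : ℤˣ) : ι → ℤˣ) j : ℝ) = if i = j then -1 else 1 := fun j => by
    rw [Pi.mulSingle_apply]; split_ifs <;> simp_all [eq_comm]
  simp only [walsh, this, prod_ite_eq]

variable [Fintype ι]

lemma norm_signs_le_one (σ : ι → ℤˣ) : ‖fun k => (σ k : ℝ)‖ ≤ 1 :=
  (pi_norm_le_iff_of_nonneg zero_le_one).2 fun k => by simp [abs_coe_units_int]

lemma sum_walsh_finset (ε : ι → ℤˣ) :
    ∑ A, walsh A ε = if ε = 1 then 2 ^ Fintype.card ι else 0 := by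
  have h := prod_one_add (f := fun i => (ε i : ℝ)) univ
  rw [powerset_univ] at h
  simp only [walsh, ← h]
  split_ifs with hε
  · simp [hε]; norm_num
  · obtain ⟨i, hi⟩ := Function.ne_iff.1 hε
    refine prod_eq_zero (mem_univ i) ?_
    rcases Int.units_eq_one_or (ε i) with h | h
    · exact absurd h hi
    · simp [h]

variable [DecidableEq ι]

lemma sum_walsh (A : Finset ι) :
    ∑ ε, walsh A ε = if A = ∅ then 2 ^ Fintype.card ι else 0 := by
  have key : ∀ ε : ι → ℤˣ, walsh A ε = ∏ i, if i ∈ A then (ε i : ℝ) else 1 := fun ε => by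
    rw [walsh, prod_ite_mem, univ_inter]
  simp_rw [key]
  rw [← Fintype.prod_sum (fun i (u : ℤˣ) => if i ∈ A then (u : ℝ) else 1)]
  simp_rw [sum_units_int]
  split_ifs with hA
  · simp [hA]; norm_num
  · obtain ⟨i, hi⟩ := nonempty_iff_ne_empty.2 hA
    exact prod_eq_zero (mem_univ i) (by simp [hi])

def walshCoeff (f : (ι → ℤˣ) → ℝ) (A : Finset ι) : ℝ := ∑ ε, f ε * walsh A ε

lemma walshCoeff_comp_mul (f : (ι → ℤˣ) → ℝ) (γ : ι → ℤˣ) (A : Finset ι) :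
    walshCoeff (fun ε => f (ε * γ)) A = walsh A γ * walshCoeff f A := by
  rw [walshCoeff, walshCoeff, mul_sum]
  refine Fintype.sum_equiv (Equiv.mulRight γ) _ _ fun ε => ?_
  simp only [Equiv.coe_mulRight, walsh_mul]
  linear_combination -(f (ε * γ) * walsh A ε) * walsh_mul_self A γ

lemma sum_walshCoeff_sq (f : (ι → ℤˣ) → ℝ) :
    ∑ A, walshCoeff f A ^ 2 = 2 ^ Fintype.card ι * ∑ ε, f ε ^ 2 := by
  have hδ : ∀ ε δ : ι → ℤˣ, ε * δ = 1 ↔ δ = ε := fun ε δ => by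
    rw [mul_eq_one_iff_inv_eq, inv_eq_of_mul_eq_one_right (mul_self_signs ε), eq_comm]
  calc ∑ A, walshCoeff f A ^ 2 = ∑ A, ∑ ε, ∑ δ, f ε * f δ * walsh A (ε * δ) := by
        refine sum_congr rfl fun A _ => ?_
        rw [sq, walshCoeff, sum_mul_sum]
        exact sum_congr rfl fun ε _ => sum_congr rfl fun δ _ => by rw [walsh_mul]; ring
    _ = ∑ ε, ∑ δ, f ε * f δ * ∑ A, walsh A (ε * δ) := by
        rw [sum_comm]
        simp_rw [mul_sum]
        exact sum_congr rfl fun ε _ => sum_comm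
    _ = 2 ^ Fintype.card ι * ∑ ε, f ε ^ 2 := by
        simp only [sum_walsh_finset, hδ, mul_ite, mul_zero, sum_ite_eq', mem_univ, if_true,
          mul_sum]
        exact sum_congr rfl fun ε _ => by ring

lemma walshCoeff_eq_zero_of_odd_card (f : (ι → ℤˣ) → ℝ) (hf : ∀ ε, f (-ε) = f ε)
    {A : Finset ι} (hA : Odd #A) : walshCoeff f A = 0 := by
  have h := walshCoeff_comp_mul f (-1) A
  simp only [mul_neg_one, hf, walsh_neg, walsh_one, hA.neg_one_pow] at h
  linarith

lemma four_mul_sum_card_mul_walshCoeff_sq (f : (ι → ℤˣ) → ℝ) :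
    4 * ∑ A, #A * walshCoeff f A ^ 2 =
      2 ^ Fintype.card ι * ∑ i, ∑ ε, (f ε - f (ε * Pi.mulSingle i (-1))) ^ 2 := by
  have hcoeff : ∀ i A, walshCoeff (fun ε => f ε - f (ε * Pi.mulSingle i (-1))) A
      = if i ∈ A then 2 * walshCoeff f A else 0 := by
    intro i A
    have h := walshCoeff_comp_mul f (Pi.mulSingle i (-1)) A
    rw [walsh_mulSingle_neg_one] at h
    simp only [walshCoeff, sub_mul, sum_sub_distrib] at h ⊢
    split_ifs at h ⊢ <;> linarith
  rw [mul_sum univ _ ((2 : ℝ) ^ Fintype.card ι)]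
  simp_rw [← sum_walshCoeff_sq, hcoeff, ite_pow, zero_pow two_ne_zero]
  rw [sum_comm, mul_sum]
  refine sum_congr rfl fun A _ => ?_
  rw [sum_ite_mem, univ_inter, sum_const, nsmul_eq_mul]
  ring

theorem poincare_inequality_of_even (f : (ι → ℤˣ) → ℝ) (hf : ∀ ε, f (-ε) = f ε) :
    8 * (2 ^ Fintype.card ι * ∑ ε, f ε ^ 2 - (∑ ε, f ε) ^ 2) ≤
      2 ^ Fintype.card ι * ∑ i, ∑ ε, (f ε - f (ε * Pi.mulSingle i (-1))) ^ 2 := by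
  have h0 : walshCoeff f ∅ = ∑ ε, f ε := by simp [walshCoeff, walsh]
  have hterm : ∀ A ∈ univ.erase ∅, 2 * walshCoeff f A ^ 2 ≤ #A * walshCoeff f A ^ 2 := by
    intro A hA
    have hA₀ : #A ≠ 0 := card_ne_zero.2 (nonempty_iff_ne_empty.2 (ne_of_mem_erase hA))
    obtain h₁ | h₂ : #A = 1 ∨ 2 ≤ #A := by omega
    · simp [walshCoeff_eq_zero_of_odd_card f hf (by simp [h₁] : Odd #A)]
    · gcongr
      exact_mod_cast h₂
  rw [← four_mul_sum_card_mul_walshCoeff_sq, ← sum_walshCoeff_sq, ← h0,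
    ← add_sum_erase _ _ (mem_univ ∅), ← add_sum_erase _ _ (mem_univ ∅)]
  have := sum_le_sum hterm
  rw [← mul_sum] at this
  simp only [card_empty, Nat.cast_zero, zero_mul, zero_add]
  linarith

lemma sum_coe_mul_coe (i k : ι) :
    ∑ ε : ι → ℤˣ, (ε i : ℝ) * ε k = if i = k then 2 ^ Fintype.card ι else 0 := by
  split_ifs with h
  · subst h
    have : ∀ ε : ι → ℤˣ, (ε i : ℝ) * ε i = 1 := fun ε => by
      simpa [walsh] using walsh_mul_self {i} ε
    simp [this]
  · simpa [walsh, prod_pair h] using sum_walsh {i, k}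

variable {E : Type*} [NormedAddCommGroup E] [InnerProductSpace ℝ E]

lemma sum_norm_sum_smul_sq (a : ι → E) :
    ∑ ε : ι → ℤˣ, ‖∑ i, (ε i : ℝ) • a i‖ ^ 2 = 2 ^ Fintype.card ι * ∑ i, ‖a i‖ ^ 2 := by
  calc ∑ ε : ι → ℤˣ, ‖∑ i, (ε i : ℝ) • a i‖ ^ 2
      = ∑ ε : ι → ℤˣ, ∑ i, ∑ k, ((ε i : ℝ) * ε k) * inner ℝ (a k) (a i) := by
        simp only [← real_inner_self_eq_norm_sq, sum_inner, inner_sum, real_inner_smul_left,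
          real_inner_smul_right, mul_assoc]
    _ = ∑ i, ∑ k, (∑ ε : ι → ℤˣ, (ε i : ℝ) * ε k) * inner ℝ (a k) (a i) := by
        rw [sum_comm]
        simp_rw [sum_mul]
        exact sum_congr rfl fun i _ => sum_comm
    _ = 2 ^ Fintype.card ι * ∑ i, ‖a i‖ ^ 2 := by
        simp [sum_coe_mul_coe, ite_mul, mul_sum]

lemma sum_smul_mul_mulSingle_neg_one (a : ι → E) (ε : ι → ℤˣ) (i : ι) :
    ∑ k, ((ε * Pi.mulSingle i (-1) : ι → ℤˣ) k : ℝ) • a k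
      = ∑ k, (ε k : ℝ) • a k - (2 * ε i : ℝ) • a i := by
  have hc : ∀ k, ((ε * Pi.mulSingle i (-1) : ι → ℤˣ) k : ℝ)
      = ε k - if k = i then 2 * (ε i : ℝ) else 0 := by
    intro k
    by_cases hk : k = i
    · subst hk; simp; ring
    · simp [hk]
  simp only [hc, sub_smul, sum_sub_distrib, ite_smul, zero_smul, sum_ite_eq', mem_univ, if_true]

theorem szarek_inequality (a : ι → E) :
    2 ^ Fintype.card ι * √(∑ i, ‖a i‖ ^ 2) ≤ √2 * ∑ ε : ι → ℤˣ, ‖∑ i, (ε i : ℝ) • a i‖ := by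
  set S : (ι → ℤˣ) → E := fun ε => ∑ i, (ε i : ℝ) • a i
  have heven : ∀ ε, ‖S (-ε)‖ = ‖S ε‖ := fun ε => by
    simp [S, neg_smul, sum_neg_distrib]
  have hflip : ∀ i ε, (‖S ε‖ - ‖S (ε * Pi.mulSingle i (-1))‖) ^ 2 ≤ 4 * ‖a i‖ ^ 2 := by
    intro i ε
    have hS : S (ε * Pi.mulSingle i (-1)) = S ε - (2 * ε i : ℝ) • a i :=
      sum_smul_mul_mulSingle_neg_one a ε i
    have h := abs_norm_sub_norm_le (S ε) (S ε - (2 * ε i : ℝ) • a i)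
    rw [sub_sub_cancel, norm_smul, Real.norm_eq_abs, abs_mul, abs_two, abs_coe_units_int,
      mul_one] at h
    rw [hS, ← sq_abs]
    nlinarith [abs_nonneg (‖S ε‖ - ‖S ε - (2 * ε i : ℝ) • a i‖)]
  have hdir : ∑ i, ∑ ε, (‖S ε‖ - ‖S (ε * Pi.mulSingle i (-1))‖) ^ 2
      ≤ 4 * 2 ^ Fintype.card ι * ∑ i, ‖a i‖ ^ 2 := by
    calc _ ≤ ∑ i, ∑ _ε : ι → ℤˣ, 4 * ‖a i‖ ^ 2 :=
          sum_le_sum fun i _ => sum_le_sum fun ε _ => hflip i ε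
      _ = _ := by simp [mul_sum, ← mul_assoc, mul_comm]
  have h := poincare_inequality_of_even (fun ε => ‖S ε‖) heven
  rw [sum_norm_sum_smul_sq] at h
  refine (pow_le_pow_iff_left₀ (by positivity) (by positivity) two_ne_zero).1 ?_
  rw [mul_pow, mul_pow, Real.sq_sqrt (by positivity), Real.sq_sqrt zero_le_two]
  linarith [mul_le_mul_of_nonneg_left hdir (by positivity : (0 : ℝ) ≤ 2 ^ Fintype.card ι)]

end Hypercube

namespace MixedLittlewood

open Hypercube

lemma sum_fin_succ_pi {α M : Type*} [Fintype α] [AddCommMonoid M] {n : ℕ}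
    (g : (Fin (n + 1) → α) → M) : ∑ j, g j = ∑ i, ∑ j : Fin n → α, g (Fin.cons i j) := by
  rw [← (Fin.consEquiv fun _ => α).sum_comp, Fintype.sum_prod_type]
  rfl

variable {ι : Type*} [Fintype ι] [DecidableEq ι]

lemma map_cons_eq_sum {n : ℕ} (V : MultilinearMap ℝ (fun _ : Fin (n + 1) => ι → ℝ) ℝ)
    (y : ι → ℝ) (x : Fin n → ι → ℝ) :
    V (Fin.cons y x) = ∑ i, y i * V (Fin.cons (Pi.single i 1) x) := by
  simp_rw [← V.curryLeft_apply]
  conv_lhs => rw [pi_eq_sum_univ' y]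
  simp [map_sum, map_smul]

theorem khintchine_multilinear (n : ℕ) (V : MultilinearMap ℝ (fun _ : Fin n => ι → ℝ) ℝ) :
    (2 ^ Fintype.card ι) ^ n * √(∑ j : Fin n → ι, V (fun t => Pi.single (j t) 1) ^ 2)
      ≤ √2 ^ n * ∑ σ : Fin n → ι → ℤˣ, |V (fun t k => (σ t k : ℝ))| := by
  induction n with
  | zero =>
    simp [Real.sqrt_sq_eq_abs, Subsingleton.elim _ (fun t : Fin 0 => Fin.elim0 t)]
  | succ n ih =>
    set K : ℝ := 2 ^ Fintype.card ι
    let a : ι → EuclideanSpace ℝ (Fin n → ι) := fun i =>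
      WithLp.toLp 2 fun j => V (Fin.cons (Pi.single i 1) fun t => Pi.single (j t) 1)
    have hsplit :
        ∑ j : Fin (n + 1) → ι, V (fun t => Pi.single (j t) 1) ^ 2 = ∑ i, ‖a i‖ ^ 2 := by
      have hcons : ∀ i (j : Fin n → ι),
          (fun t => (Pi.single ((Fin.cons i j : Fin (n + 1) → ι) t) 1 : ι → ℝ))
            = Fin.cons (Pi.single i 1) fun t => Pi.single (j t) 1 := fun i j =>
        Fin.comp_cons (fun k => (Pi.single k 1 : ι → ℝ)) i j
      simp only [EuclideanSpace.real_norm_sq_eq, a, sum_fin_succ_pi, hcons]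
    have hcomb : ∀ ε : ι → ℤˣ, ‖∑ i, (ε i : ℝ) • a i‖
        = √(∑ j : Fin n → ι,
            V (Fin.cons (fun k => (ε k : ℝ)) fun t => Pi.single (j t) 1) ^ 2) := by
      intro ε
      simp [EuclideanSpace.norm_eq, a, map_cons_eq_sum V (fun k => (ε k : ℝ))]
    calc K ^ (n + 1) * √(∑ j : Fin (n + 1) → ι, V (fun t => Pi.single (j t) 1) ^ 2)
        = K ^ n * (K * √(∑ i, ‖a i‖ ^ 2)) := by rw [hsplit, pow_succ, mul_assoc]
      _ ≤ K ^ n * (√2 * ∑ ε : ι → ℤˣ, ‖∑ i, (ε i : ℝ) • a i‖) :=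
        mul_le_mul_of_nonneg_left (szarek_inequality a) (by positivity)
      _ = √2 * ∑ ε : ι → ℤˣ, K ^ n * √(∑ j : Fin n → ι,
            V.curryLeft (fun k => (ε k : ℝ)) (fun t => Pi.single (j t) 1) ^ 2) := by
        simp only [hcomb, mul_sum, V.curryLeft_apply, mul_left_comm (K ^ n)]
      _ ≤ √2 * ∑ ε : ι → ℤˣ, √2 ^ n * ∑ σ : Fin n → ι → ℤˣ,
            |V.curryLeft (fun k => (ε k : ℝ)) (fun t k => (σ t k : ℝ))| :=
        mul_le_mul_of_nonneg_left (sum_le_sum fun ε _ => ih _) (by positivity)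
      _ = √2 ^ (n + 1) * ∑ σ : Fin (n + 1) → ι → ℤˣ, |V (fun t k => (σ t k : ℝ))| := by
        have hcons : ∀ (ε : ι → ℤˣ) (σ : Fin n → ι → ℤˣ),
            (fun t k => ((Fin.cons ε σ : Fin (n + 1) → ι → ℤˣ) t k : ℝ))
              = Fin.cons (fun k => (ε k : ℝ)) fun t k => (σ t k : ℝ) := fun ε σ =>
          Fin.comp_cons (fun e k => (e k : ℝ)) ε σ
        simp only [sum_fin_succ_pi, hcons, V.curryLeft_apply, mul_sum, pow_succ', mul_assoc]

lemma sum_abs_apply_single_le (L : (ι → ℝ) →ₗ[ℝ] ℝ) {M : ℝ}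
    (hL : ∀ x : ι → ℝ, ‖x‖ ≤ 1 → L x ≤ M) : ∑ k, |L (Pi.single k 1)| ≤ M := by
  set τ : ι → ℝ := fun k => SignType.sign (L (Pi.single k 1))
  have hτ : ‖τ‖ ≤ 1 := (pi_norm_le_iff_of_nonneg zero_le_one).2 fun k => by
    rcases lt_trichotomy (L (Pi.single k 1)) 0 with h | h | h <;> simp [τ, h]
  calc ∑ k, |L (Pi.single k 1)| = L τ := by
        conv_rhs => rw [pi_eq_sum_univ' τ]
        simp [τ, sign_mul_self]
    _ ≤ M := hL τ hτ

theorem sum_sqrt_sum_sq_le (n : ℕ)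
    (U : ContinuousMultilinearMap ℝ (fun _ : Fin (n + 1) => ι → ℝ) ℝ) :
    ∑ j₁ : ι, √(∑ j : Fin n → ι, U (Fin.cons (Pi.single j₁ 1) fun i => Pi.single (j i) 1) ^ 2)
      ≤ √2 ^ n * ‖U‖ := by
  set K : ℝ := 2 ^ Fintype.card ι
  have hrow : ∀ j₁ : ι, K ^ n * √(∑ j : Fin n → ι,
      U (Fin.cons (Pi.single j₁ 1) fun i => Pi.single (j i) 1) ^ 2)
        ≤ √2 ^ n * ∑ σ : Fin n → ι → ℤˣ, |U (Fin.cons (Pi.single j₁ 1) fun t k => (σ t k : ℝ))| :=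
    fun j₁ => khintchine_multilinear n (U.toMultilinearMap.curryLeft (Pi.single j₁ 1))
  have hcol : ∀ σ : Fin n → ι → ℤˣ,
      ∑ j₁ : ι, |U (Fin.cons (Pi.single j₁ 1) fun t k => (σ t k : ℝ))| ≤ ‖U‖ := by
    intro σ
    have h := sum_abs_apply_single_le (M := ‖U‖)
      (U.toMultilinearMap.toLinearMap (Fin.cons 0 fun t k => (σ t k : ℝ)) 0) fun x hx => by
        simp only [MultilinearMap.toLinearMap_apply, Fin.update_cons_zero,
          ContinuousMultilinearMap.coe_coe]
        calc _ ≤ ‖U (Fin.cons x fun t k => (σ t k : ℝ))‖ := Real.le_norm_self _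
          _ ≤ ‖U‖ * ∏ i, ‖(Fin.cons x fun t k => (σ t k : ℝ) : Fin (n + 1) → ι → ℝ) i‖ :=
            U.le_opNorm _
          _ ≤ ‖U‖ * 1 := by
            gcongr
            rw [Fin.prod_univ_succ]
            exact mul_le_one₀ hx (by positivity)
              (prod_le_one (fun _ _ => norm_nonneg _) fun t _ => norm_signs_le_one (σ t))
          _ = ‖U‖ := mul_one _
    simpa [MultilinearMap.toLinearMap_apply, Fin.update_cons_zero] using h
  have hcard : ∑ _σ : Fin n → ι → ℤˣ, ‖U‖ = K ^ n * ‖U‖ := by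
    simp [K, ← pow_mul, mul_comm]
  refine le_of_mul_le_mul_left ?_ (by positivity : (0 : ℝ) < K ^ n)
  calc K ^ n * ∑ j₁ : ι, √(∑ j : Fin n → ι,
        U (Fin.cons (Pi.single j₁ 1) fun i => Pi.single (j i) 1) ^ 2)
      ≤ ∑ j₁ : ι, √2 ^ n * ∑ σ : Fin n → ι → ℤˣ,
          |U (Fin.cons (Pi.single j₁ 1) fun t k => (σ t k : ℝ))| := by
        rw [mul_sum]; exact sum_le_sum fun j₁ _ => hrow j₁
    _ = √2 ^ n * ∑ σ : Fin n → ι → ℤˣ, ∑ j₁ : ι,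
          |U (Fin.cons (Pi.single j₁ 1) fun t k => (σ t k : ℝ))| := by
        rw [← mul_sum, sum_comm]
    _ ≤ √2 ^ n * ∑ _σ : Fin n → ι → ℤˣ, ‖U‖ := by gcongr with σ; exact hcol σ
    _ = K ^ n * (√2 ^ n * ‖U‖) := by rw [hcard]; ring

section Extremal

lemma abs_add_add_abs_sub_le {u v M : ℝ} (hu : |u| ≤ M) (hv : |v| ≤ M) :
    |u + v| + |u - v| ≤ 2 * M := by
  rcases abs_cases (u + v) with ⟨h₁, -⟩ | ⟨h₁, -⟩ <;>
    rcases abs_cases (u - v) with ⟨h₂, -⟩ | ⟨h₂, -⟩ <;> linarith [abs_le.1 hu, abs_le.1 hv]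

variable {κ : Type*} {n : ℕ}

noncomputable def extremalForm (e : (Fin n → ℤˣ) ≃ κ) (i₀ i₁ : κ) :
    ContinuousMultilinearMap ℝ (fun _ : Fin (n + 1) => κ → ℝ) ℝ :=
  ∑ b : Fin n → ℤˣ,
    (ContinuousMultilinearMap.mkPiAlgebra ℝ (Fin (n + 1)) ℝ).compContinuousLinearMap
      (Fin.cons (ContinuousLinearMap.proj (e b)) fun t =>
        ContinuousLinearMap.proj i₀ + ((b t : ℤ) : ℝ) • ContinuousLinearMap.proj i₁)

variable (e : (Fin n → ℤˣ) ≃ κ) {i₀ i₁ : κ}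

lemma extremalForm_apply (x : Fin (n + 1) → κ → ℝ) :
    extremalForm e i₀ i₁ x = ∑ b : Fin n → ℤˣ,
      x 0 (e b) * ∏ t, (x t.succ i₀ + (b t : ℝ) * x t.succ i₁) := by
  simp [extremalForm, Fin.prod_univ_succ]

lemma extremalForm_single [DecidableEq κ] (j₁ : κ) (j : Fin n → κ) :
    extremalForm e i₀ i₁ (Fin.cons (Pi.single j₁ 1) fun t => Pi.single (j t) 1)
      = ∏ t, ((Pi.single (j t) 1 : κ → ℝ) i₀
          + (e.symm j₁ t : ℝ) * (Pi.single (j t) 1 : κ → ℝ) i₁) := by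
  rw [extremalForm_apply, Fintype.sum_eq_single (e.symm j₁) fun b hb => ?_]
  · simp
  · have hne : e b ≠ j₁ := fun h => hb (by rw [← h, e.symm_apply_apply])
    simp [Pi.single_apply, hne]

variable [Fintype κ]

lemma norm_extremalForm_le : ‖extremalForm e i₀ i₁‖ ≤ 2 ^ n := by
  refine ContinuousMultilinearMap.opNorm_le_bound (by positivity) fun x => ?_
  have hpair : ∀ y : κ → ℝ, ∑ s : ℤˣ, |y i₀ + (s : ℝ) * y i₁| ≤ 2 * ‖y‖ := fun y => by
    simpa [sum_units_int, ← sub_eq_add_neg] using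
      abs_add_add_abs_sub_le (norm_le_pi_norm y i₀) (norm_le_pi_norm y i₁)
  calc ‖extremalForm e i₀ i₁ x‖
      ≤ ∑ b : Fin n → ℤˣ, ‖x 0‖ * ∏ t, |x t.succ i₀ + (b t : ℝ) * x t.succ i₁| := by
        rw [extremalForm_apply, Real.norm_eq_abs]
        refine (abs_sum_le_sum_abs _ _).trans (sum_le_sum fun b _ => ?_)
        rw [abs_mul, abs_prod]
        gcongr
        exact norm_le_pi_norm (x 0) (e b)
    _ = ‖x 0‖ * ∏ t : Fin n, ∑ s : ℤˣ, |x t.succ i₀ + (s : ℝ) * x t.succ i₁| := by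
        rw [← mul_sum, Fintype.prod_sum]
    _ ≤ ‖x 0‖ * ∏ t : Fin n, 2 * ‖x t.succ‖ := by
        gcongr with t
        exact hpair _
    _ = 2 ^ n * ∏ i, ‖x i‖ := by
        rw [prod_mul_distrib, prod_const, card_univ, Fintype.card_fin, Fin.prod_univ_succ]
        ring

variable [DecidableEq κ]

lemma sum_extremalForm_single_sq (h : i₀ ≠ i₁) (j₁ : κ) :
    ∑ j : Fin n → κ,
      extremalForm e i₀ i₁ (Fin.cons (Pi.single j₁ 1) fun t => Pi.single (j t) 1) ^ 2 = 2 ^ n := by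
  set g : ℤˣ → κ → ℝ := fun s k => (Pi.single k 1 : κ → ℝ) i₀ + s * (Pi.single k 1 : κ → ℝ) i₁
  have hrow : ∀ s, ∑ k, g s k ^ 2 = 2 := by
    intro s
    rw [Fintype.sum_eq_add i₀ i₁ h]
    · rcases Int.units_eq_one_or s with rfl | rfl <;> simp [g, h, h.symm] <;> norm_num
    · rintro k ⟨hk₀, hk₁⟩
      simp [g, hk₀.symm, hk₁.symm]
  simp_rw [extremalForm_single, ← prod_pow]
  rw [← Fintype.prod_sum fun t k => g (e.symm j₁ t) k ^ 2]
  simp [hrow]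

theorem sqrt_two_pow_le_of_extremalForm (h : i₀ ≠ i₁) {C : ℝ} (hC : 0 ≤ C)
    (hU : ∑ j₁ : κ, √(∑ j : Fin n → κ,
        |extremalForm e i₀ i₁ (Fin.cons (Pi.single j₁ 1) fun i => Pi.single (j i) 1)| ^ 2)
      ≤ C * ‖extremalForm e i₀ i₁‖) : √2 ^ n ≤ C := by
  have hpow : (2 : ℝ) ^ n = (√2 ^ n) ^ 2 := by
    rw [← pow_mul, mul_comm, pow_mul, Real.sq_sqrt zero_le_two]
  have hcard : (Fintype.card κ : ℝ) = 2 ^ n := by simp [← Fintype.card_congr e]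
  simp only [sq_abs, sum_extremalForm_single_sq e h, hpow, sum_const, card_univ, nsmul_eq_mul,
    Real.sqrt_sq (by positivity : (0 : ℝ) ≤ √2 ^ n), hcard] at hU
  have := hU.trans (mul_le_mul_of_nonneg_left (norm_extremalForm_le e) hC)
  rw [hpow, mul_comm C] at this
  exact le_of_mul_le_mul_left this (by positivity)

end Extremal

end MixedLittlewood

/-- **The optimal constant of the mixed (ℓ₁,ℓ₂)-Littlewood inequality is `(√2)^{m-1}`.**
For every integer `m ≥ 2` (written as `m + 2`), the least constant `C ≥ 0` such that
`∑_{j₁} (∑_{j₂,...,j_m} |U(e_{j₁},...,e_{j_m})|²)^{1/2} ≤ C ‖U‖` for every positive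
integer `N` and every continuous `m`-linear form `U` on `(ℝ^N)^m` (sup norm) is exactly
`(√2)^{m-1}`; in particular the infimum is attained. -/
theorem mixed_littlewood_optimal_constant (m : ℕ) :
    IsLeast {C : ℝ | 0 ≤ C ∧ ∀ N : ℕ, 0 < N →
      ∀ U : ContinuousMultilinearMap ℝ (fun _ : Fin (m + 2) => (Fin N → ℝ)) ℝ,
        ∑ j₁ : Fin N, Real.sqrt (∑ j : Fin (m + 1) → Fin N,
            |U (Fin.cons (Pi.single j₁ 1) (fun i => Pi.single (j i) 1))| ^ 2)
          ≤ C * ‖U‖}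
      (Real.sqrt 2 ^ (m + 1)) := by
  refine ⟨⟨by positivity, fun N _ U => ?_⟩, fun C ⟨hC, hCU⟩ => ?_⟩
  · simpa only [sq_abs] using MixedLittlewood.sum_sqrt_sum_sq_le (m + 1) U
  · have hN : 1 < 2 ^ (m + 1) := Nat.one_lt_two_pow (by omega)
    let e : (Fin (m + 1) → ℤˣ) ≃ Fin (2 ^ (m + 1)) := Fintype.equivFinOfCardEq (by simp)
    exact MixedLittlewood.sqrt_two_pow_le_of_extremalForm e (i₀ := ⟨0, by omega⟩) (i₁ := ⟨1, hN⟩)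
      (by simp [Fin.ext_iff]) hC (hCU _ (by positivity) _)
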